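/- Let Ũ_Δ be the groupoid whose objects are tuples (A₀, A₁, a, φ) with A₀, A₁ κ-small sets, a ∈ A₀, φ : A₀ ≅ A₁ a bijection, and whose morphisms (A₀,A₁,a,φ) → (B₀,B₁,b,ψ) are pairs of bijections (ρ₀ : A₀ ≅ B₀, ρ₁ : A₁ ≅ B₁) with ρ₀(a) = b and ψ ∘ ρ₀ = ρ₁ ∘ φ; let U_Δ be the unpointed version and p_Δ the forgetful functor. Equip both with the involutions ũ(A₀,A₁,a,φ) = (A₁,A₀,φ(a),φ⁻¹) and u(A₀,A₁,φ) = (A₁,A₀,φ⁻¹). Then p_Δ has the equivariant right lifting property with respect to the inclusion Ǐ ↪ ▽: every commutative equivariant square from Ǐ ↪ ▽ to p_Δ admits an equivariant diagonal filler. -/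

import Mathlib

open CategoryTheory

/-- An object of `Ũ_Δ`: a pair of (small) sets with a chosen point of the first
and a bijection between them. -/
structure UPtObj : Type 1 where
  A0 : Type
  A1 : Type
  pt : A0
  e : A0 ≃ A1

/-- An object of `U_Δ`: a pair of (small) sets with a bijection between them. -/
structure UObj : Type 1 where
  A0 : Type
  A1 : Type
  e : A0 ≃ A1

/-- A morphism of `Ũ_Δ`: a pair of bijections preserving the point and commuting
with the structure bijections. -/
@[ext]
structure UPtHom (X Y : UPtObj) where
  r0 : X.A0 ≃ Y.A0
  r1 : X.A1 ≃ Y.A1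
  hpt : r0 X.pt = Y.pt
  comm : ∀ a, Y.e (r0 a) = r1 (X.e a)

/-- A morphism of `U_Δ`: a pair of bijections commuting with the structure
bijections. -/
@[ext]
structure UHom (X Y : UObj) where
  r0 : X.A0 ≃ Y.A0
  r1 : X.A1 ≃ Y.A1
  comm : ∀ a, Y.e (r0 a) = r1 (X.e a)

instance : Category UPtObj where
  Hom := UPtHom
  id X := ⟨Equiv.refl _, Equiv.refl _, rfl, fun _ => rfl⟩
  comp m n := ⟨m.r0.trans n.r0, m.r1.trans n.r1,
    by simp [m.hpt, n.hpt], fun a => by simp [m.comm, n.comm]⟩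
  id_comp m := by apply UPtHom.ext <;> simp [Equiv.trans_assoc]
  comp_id m := by apply UPtHom.ext <;> simp [Equiv.trans_assoc]
  assoc m n o := by apply UPtHom.ext <;> simp [Equiv.trans_assoc]

instance : Category UObj where
  Hom := UHom
  id X := ⟨Equiv.refl _, Equiv.refl _, fun _ => rfl⟩
  comp m n := ⟨m.r0.trans n.r0, m.r1.trans n.r1, fun a => by simp [m.comm, n.comm]⟩
  id_comp m := by apply UHom.ext <;> simp [Equiv.trans_assoc]
  comp_id m := by apply UHom.ext <;> simp [Equiv.trans_assoc]
  assoc m n o := by apply UHom.ext <;> simp [Equiv.trans_assoc]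

/-- The universal fibration `p_Δ : Ũ_Δ ⥤ U_Δ`, forgetting the point. -/
def pDelta : UPtObj ⥤ UObj where
  obj X := ⟨X.A0, X.A1, X.e⟩
  map m := ⟨m.r0, m.r1, m.comm⟩
  map_id X := rfl
  map_comp m n := rfl

/-- The involution `ũ` on `Ũ_Δ`: `(A₀, A₁, a, φ) ↦ (A₁, A₀, φ a, φ⁻¹)`. -/
def invUPt : UPtObj ⥤ UPtObj where
  obj X := ⟨X.A1, X.A0, X.e X.pt, X.e.symm⟩
  map := fun {X Y} m => ⟨m.r1, m.r0,
    by rw [← m.comm, m.hpt],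
    fun a => by
      have h := m.comm (X.e.symm a)
      rw [Equiv.apply_symm_apply] at h
      show Y.e.symm (m.r1 a) = m.r0 (X.e.symm a)
      rw [← h, Equiv.symm_apply_apply]⟩
  map_id X := rfl
  map_comp m n := rfl

/-- The involution `u` on `U_Δ`: `(A₀, A₁, φ) ↦ (A₁, A₀, φ⁻¹)`. -/
def invU : UObj ⥤ UObj where
  obj X := ⟨X.A1, X.A0, X.e.symm⟩
  map := fun {X Y} m => ⟨m.r1, m.r0,
    fun a => by
      have h := m.comm (X.e.symm a)
      rw [Equiv.apply_symm_apply] at h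
      show Y.e.symm (m.r1 a) = m.r0 (X.e.symm a)
      rw [← h, Equiv.symm_apply_apply]⟩
  map_id X := rfl
  map_comp m n := rfl

/-- The interval groupoid `Ǐ`: objects `0, 1` (modelled by `Bool`), one
isomorphism between them; it carries the swap involution. -/
def Iv := Bool

instance : Groupoid Iv where
  Hom _ _ := PUnit
  id _ := ⟨⟩
  comp _ _ := ⟨⟩
  inv _ := ⟨⟩

/-- `▽`: the contractible groupoid on three objects `0, 1, 2` extending `Ǐ`. -/
def Tri := Fin 3

instance : Groupoid Tri where
  Hom _ _ := PUnit
  id _ := ⟨⟩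
  comp _ _ := ⟨⟩
  inv _ := ⟨⟩

/-- The flip involution on `Ǐ`. -/
def invIv : Iv ⥤ Iv where
  obj b := !b
  map _ := ⟨⟩

/-- The involution on `▽`, swapping `0` and `1` and fixing `2`. -/
def invTri : Tri ⥤ Tri where
  obj i := (![1, 0, 2] : Fin 3 → Fin 3) (show Fin 3 from i)
  map _ := ⟨⟩

/-- The equivariant inclusion `Ǐ ↪ ▽`. -/
def inclIvTri : Iv ⥤ Tri where
  obj b := bif (show Bool from b) then (1 : Fin 3) else (0 : Fin 3)
  map _ := ⟨⟩


namespace Lifting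

instance : Groupoid UPtObj where
  inv {X Y} m := ⟨m.r0.symm, m.r1.symm,
    by rw [← m.hpt, Equiv.symm_apply_apply],
    fun a => by
      have h := m.comm (m.r0.symm a)
      rw [Equiv.apply_symm_apply] at h
      rw [h, Equiv.symm_apply_apply]⟩
  inv_comp m := by
    apply UPtHom.ext <;> ext x <;> simp [CategoryStruct.comp, CategoryStruct.id]
  comp_inv m := by
    apply UPtHom.ext <;> ext x <;> simp [CategoryStruct.comp, CategoryStruct.id]

instance : Groupoid UObj where
  inv {X Y} m := ⟨m.r0.symm, m.r1.symm,
    fun a => by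
      have h := m.comm (m.r0.symm a)
      rw [Equiv.apply_symm_apply] at h
      rw [h, Equiv.symm_apply_apply]⟩
  inv_comp m := by
    apply UHom.ext <;> ext x <;> simp [CategoryStruct.comp, CategoryStruct.id]
  comp_inv m := by
    apply UHom.ext <;> ext x <;> simp [CategoryStruct.comp, CategoryStruct.id]

@[simp] lemma UHom.comp_r0 {X Y Z : UObj} (m : X ⟶ Y) (n : Y ⟶ Z) :
    (m ≫ n).r0 = m.r0.trans n.r0 := rfl
@[simp] lemma UHom.comp_r1 {X Y Z : UObj} (m : X ⟶ Y) (n : Y ⟶ Z) :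
    (m ≫ n).r1 = m.r1.trans n.r1 := rfl
@[simp] lemma UPtHom.comp_r0 {X Y Z : UPtObj} (m : X ⟶ Y) (n : Y ⟶ Z) :
    (m ≫ n).r0 = m.r0.trans n.r0 := rfl
@[simp] lemma UPtHom.comp_r1 {X Y Z : UPtObj} (m : X ⟶ Y) (n : Y ⟶ Z) :
    (m ≫ n).r1 = m.r1.trans n.r1 := rfl
@[simp] lemma UHom.id_r0 (X : UObj) : UHom.r0 (𝟙 X) = Equiv.refl _ := rfl
@[simp] lemma UHom.id_r1 (X : UObj) : UHom.r1 (𝟙 X) = Equiv.refl _ := rfl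
@[simp] lemma UPtHom.id_r0 (X : UPtObj) : UPtHom.r0 (𝟙 X) = Equiv.refl _ := rfl
@[simp] lemma UPtHom.id_r1 (X : UPtObj) : UPtHom.r1 (𝟙 X) = Equiv.refl _ := rfl

lemma UObj.eqToHom_r0 {X Y : UObj} (p : X = Y) (x : X.A0) :
    (eqToHom p).r0 x = cast (congrArg UObj.A0 p) x := by subst p; rfl
lemma UObj.eqToHom_r1 {X Y : UObj} (p : X = Y) (x : X.A1) :
    (eqToHom p).r1 x = cast (congrArg UObj.A1 p) x := by subst p; rfl
lemma UPtObj.eqToHom_r0 {X Y : UPtObj} (p : X = Y) (x : X.A0) :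
    (eqToHom p).r0 x = cast (congrArg UPtObj.A0 p) x := by subst p; rfl
lemma UPtObj.eqToHom_r1 {X Y : UPtObj} (p : X = Y) (x : X.A1) :
    (eqToHom p).r1 x = cast (congrArg UPtObj.A1 p) x := by subst p; rfl

lemma heq_pt {X Y : UPtObj} (p : X = Y) : HEq X.pt Y.pt := by subst p; rfl

lemma triCases (P : Tri → Prop) (h0 : P (0 : Fin 3)) (h1 : P (1 : Fin 3))
    (h2 : P (2 : Fin 3)) : ∀ i : Tri, P i := by
  rintro ⟨i, hi⟩
  match i, hi with
  | 0, _ => exact h0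
  | 1, _ => exact h1
  | 2, _ => exact h2

section ext

variable {C : Type*} [Groupoid C]

/-- The canonical map. -/
def tmap (F : Tri ⥤ C) (i i' : Tri) : F.obj i ⟶ F.obj i' :=
  F.map (X := i) (Y := i') ⟨⟩

def imap (F : Iv ⥤ C) (i i' : Iv) : F.obj i ⟶ F.obj i' :=
  F.map (X := i) (Y := i') ⟨⟩

lemma tri_map_self (F : Tri ⥤ C) (i : Tri) : tmap F i i = 𝟙 (F.obj i) :=
  F.map_id i

lemma tri_map_comp (F : Tri ⥤ C) (i i' i'' : Tri) :
    tmap F i i'' = tmap F i i' ≫ tmap F i' i'' :=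
  F.map_comp (X := i) (Y := i') (Z := i'') ⟨⟩ ⟨⟩

lemma tri_map_inv (F : Tri ⥤ C) (i i' : Tri) :
    tmap F i' i = Groupoid.inv (tmap F i i') := by
  rw [← Category.id_comp (tmap F i' i), ← Groupoid.inv_comp (tmap F i i'),
    Category.assoc, ← tri_map_comp, tri_map_self, Category.comp_id]

lemma groupoid_inv_comp3 {X Y X' Y' : C} (p : X' = X) (q : Y = Y') (u : X ⟶ Y) :
    Groupoid.inv (eqToHom p ≫ u ≫ eqToHom q) =
      eqToHom q.symm ≫ Groupoid.inv u ≫ eqToHom p.symm := by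
  subst p; subst q; simp

lemma tri_ext {F G : Tri ⥤ C}
    (h0 : F.obj (0 : Fin 3) = G.obj (0 : Fin 3))
    (h1 : F.obj (1 : Fin 3) = G.obj (1 : Fin 3))
    (h2 : F.obj (2 : Fin 3) = G.obj (2 : Fin 3))
    (m01 : tmap F (0 : Fin 3) (1 : Fin 3) =
      eqToHom h0 ≫ tmap G (0 : Fin 3) (1 : Fin 3) ≫ eqToHom h1.symm)
    (m12 : tmap F (1 : Fin 3) (2 : Fin 3) =
      eqToHom h1 ≫ tmap G (1 : Fin 3) (2 : Fin 3) ≫ eqToHom h2.symm) :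
    F = G := by
  have hobj : ∀ i : Tri, F.obj i = G.obj i := triCases _ h0 h1 h2
  have m10 : tmap F (1 : Fin 3) (0 : Fin 3) =
      eqToHom h1 ≫ tmap G (1 : Fin 3) (0 : Fin 3) ≫ eqToHom h0.symm := by
    rw [tri_map_inv F (0 : Fin 3) (1 : Fin 3), m01, groupoid_inv_comp3,
      ← tri_map_inv G (0 : Fin 3) (1 : Fin 3)]
  have m21 : tmap F (2 : Fin 3) (1 : Fin 3) =
      eqToHom h2 ≫ tmap G (2 : Fin 3) (1 : Fin 3) ≫ eqToHom h1.symm := by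
    rw [tri_map_inv F (1 : Fin 3) (2 : Fin 3), m12, groupoid_inv_comp3,
      ← tri_map_inv G (1 : Fin 3) (2 : Fin 3)]
  have m02 : tmap F (0 : Fin 3) (2 : Fin 3) =
      eqToHom h0 ≫ tmap G (0 : Fin 3) (2 : Fin 3) ≫ eqToHom h2.symm := by
    rw [tri_map_comp F (0 : Fin 3) (1 : Fin 3) (2 : Fin 3), m01, m12,
      tri_map_comp G (0 : Fin 3) (1 : Fin 3) (2 : Fin 3)]
    simp
  have m20 : tmap F (2 : Fin 3) (0 : Fin 3) =
      eqToHom h2 ≫ tmap G (2 : Fin 3) (0 : Fin 3) ≫ eqToHom h0.symm := by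
    rw [tri_map_inv F (0 : Fin 3) (2 : Fin 3), m02, groupoid_inv_comp3,
      ← tri_map_inv G (0 : Fin 3) (2 : Fin 3)]
  have mii : ∀ i : Tri, tmap F i i =
      eqToHom (hobj i) ≫ tmap G i i ≫ eqToHom (hobj i).symm := by
    intro i; rw [tri_map_self, tri_map_self]; simp
  refine CategoryTheory.Functor.ext hobj ?_
  intro X Y u
  induction X using triCases with
  | h0 => induction Y using triCases with
    | h0 => exact mii _ | h1 => exact m01 | h2 => exact m02
  | h1 => induction Y using triCases with
    | h0 => exact m10 | h1 => exact mii _ | h2 => exact m12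
  | h2 => induction Y using triCases with
    | h0 => exact m20 | h1 => exact m21 | h2 => exact mii _

lemma iv_map_self (F : Iv ⥤ C) (i : Iv) : imap F i i = 𝟙 (F.obj i) :=
  F.map_id i

lemma iv_map_comp (F : Iv ⥤ C) (i i' i'' : Iv) :
    imap F i i'' = imap F i i' ≫ imap F i' i'' :=
  F.map_comp (X := i) (Y := i') (Z := i'') ⟨⟩ ⟨⟩

lemma iv_map_inv (F : Iv ⥤ C) (i i' : Iv) :
    imap F i' i = Groupoid.inv (imap F i i') := by
  rw [← Category.id_comp (imap F i' i), ← Groupoid.inv_comp (imap F i i'),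
    Category.assoc, ← iv_map_comp, iv_map_self, Category.comp_id]

lemma iv_ext {F G : Iv ⥤ C}
    (h0 : F.obj false = G.obj false)
    (h1 : F.obj true = G.obj true)
    (m01 : imap F false true = eqToHom h0 ≫ imap G false true ≫ eqToHom h1.symm) :
    F = G := by
  have hobj : ∀ i : Iv, F.obj i = G.obj i := by rintro (_|_); exacts [h0, h1]
  have m10 : imap F true false = eqToHom h1 ≫ imap G true false ≫ eqToHom h0.symm := by
    rw [iv_map_inv F false true, m01, groupoid_inv_comp3, ← iv_map_inv G false true]
  have mii : ∀ i : Iv, imap F i i =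
      eqToHom (hobj i) ≫ imap G i i ≫ eqToHom (hobj i).symm := by
    intro i; rw [iv_map_self, iv_map_self]; simp
  refine CategoryTheory.Functor.ext hobj ?_
  rintro (_|_) (_|_) u
  exacts [mii _, m01, m10, mii _]

end ext

end Lifting

open Lifting


namespace Lifting

lemma groupoid_inv_id {C : Type*} [Groupoid C] (X : C) :
    Groupoid.inv (𝟙 X) = 𝟙 X := by
  have h := Groupoid.inv_comp (𝟙 X)
  rwa [Category.comp_id] at h

@[simp] lemma invU_map_r0 {X Y : UObj} (u : X ⟶ Y) : (invU.map u).r0 = u.r1 := rfl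
@[simp] lemma invU_map_r1 {X Y : UObj} (u : X ⟶ Y) : (invU.map u).r1 = u.r0 := rfl
@[simp] lemma invUPt_map_r0 {X Y : UPtObj} (u : X ⟶ Y) : (invUPt.map u).r0 = u.r1 := rfl
@[simp] lemma invUPt_map_r1 {X Y : UPtObj} (u : X ⟶ Y) : (invUPt.map u).r1 = u.r0 := rfl
@[simp] lemma pDelta_map_r0 {X Y : UPtObj} (u : X ⟶ Y) : (pDelta.map u).r0 = u.r0 := rfl
@[simp] lemma pDelta_map_r1 {X Y : UPtObj} (u : X ⟶ Y) : (pDelta.map u).r1 = u.r1 := rfl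

lemma UPtObj.mkEq (A0 A1 : Type) (p : A0) (q : A1) (e : A0 ≃ A1) (e' : A1 ≃ A0)
    (h : (⟨A0, A1, e⟩ : UObj) = ⟨A1, A0, e'⟩) (hp : HEq p q) :
    (⟨A0, A1, p, e⟩ : UPtObj) = ⟨A1, A0, q, e'⟩ := by
  obtain ⟨hA, -, he⟩ := UObj.mk.injEq .. ▸ h
  subst hA
  rw [eq_of_heq hp, eq_of_heq he]

section lift

variable (f : Iv ⥤ UPtObj) (g : Tri ⥤ UObj)

def liftC (hg1 : g.obj (1 : Fin 3) = pDelta.obj (f.obj true)) :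
    pDelta.obj (f.obj true) ⟶ g.obj (2 : Fin 3) :=
  eqToHom hg1.symm ≫ tmap g (1 : Fin 3) (2 : Fin 3)

def liftObj2 (hg1 : g.obj (1 : Fin 3) = pDelta.obj (f.obj true)) : UPtObj :=
  ⟨(g.obj (2 : Fin 3)).A0, (g.obj (2 : Fin 3)).A1,
    (liftC f g hg1).r0 (f.obj true).pt, (g.obj (2 : Fin 3)).e⟩

def liftSigma (hg1 : g.obj (1 : Fin 3) = pDelta.obj (f.obj true)) :
    f.obj true ⟶ liftObj2 f g hg1 :=
  ⟨(liftC f g hg1).r0, (liftC f g hg1).r1, rfl, (liftC f g hg1).comm⟩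

def liftO (hg1 : g.obj (1 : Fin 3) = pDelta.obj (f.obj true)) : Tri → UPtObj
  | ⟨0, _⟩ => f.obj false
  | ⟨1, _⟩ => f.obj true
  | ⟨2, _⟩ => liftObj2 f g hg1
  | ⟨n + 3, h⟩ => absurd h (by omega)

def liftM (hg1 : g.obj (1 : Fin 3) = pDelta.obj (f.obj true)) :
    (i : Tri) → (f.obj false ⟶ liftO f g hg1 i)
  | ⟨0, _⟩ => 𝟙 _
  | ⟨1, _⟩ => imap f false true
  | ⟨2, _⟩ => imap f false true ≫ liftSigma f g hg1
  | ⟨n + 3, h⟩ => absurd h (by omega)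

def liftJ (hg1 : g.obj (1 : Fin 3) = pDelta.obj (f.obj true)) : Tri ⥤ UPtObj where
  obj := liftO f g hg1
  map {i i'} _ := Groupoid.inv (liftM f g hg1 i) ≫ liftM f g hg1 i'
  map_id i := Groupoid.inv_comp _
  map_comp {X Y Z} u v := by
    rw [Category.assoc, ← Category.assoc (liftM f g hg1 Y), Groupoid.comp_inv,
      Category.id_comp]

section key

variable (hg1 : g.obj (1 : Fin 3) = pDelta.obj (f.obj true))
  (hg0 : g.obj (0 : Fin 3) = pDelta.obj (f.obj false))
  (hO1 : f.obj false = invUPt.obj (f.obj true))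
  (hg01 : g.obj (0 : Fin 3) = invU.obj (g.obj (1 : Fin 3)))
  (hg2 : g.obj (2 : Fin 3) = invU.obj (g.obj (2 : Fin 3)))
  (hmu : tmap g (0 : Fin 3) (1 : Fin 3) =
    eqToHom hg0 ≫ pDelta.map (imap f false true) ≫ eqToHom hg1.symm)
  (hgam : tmap g (0 : Fin 3) (2 : Fin 3) =
    eqToHom hg01 ≫ invU.map (tmap g (1 : Fin 3) (2 : Fin 3)) ≫ eqToHom hg2.symm)

include hmu hgam in
lemma lift_hd : pDelta.map (imap f false true) ≫ liftC f g hg1 =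
    eqToHom hg0.symm ≫ eqToHom hg01 ≫ invU.map (tmap g (1 : Fin 3) (2 : Fin 3)) ≫
      eqToHom hg2.symm := by
  rw [← hgam, tri_map_comp g (0 : Fin 3) (1 : Fin 3) (2 : Fin 3), hmu]
  simp [liftC]

include hmu hgam in
lemma lift_E1 (x : (f.obj false).A0) :
    (liftC f g hg1).r0 ((imap f false true).r0 x) =
      cast (congrArg UObj.A0 hg2.symm)
        ((tmap g (1 : Fin 3) (2 : Fin 3)).r1
          (cast (congrArg UObj.A0 hg01) (cast (congrArg UObj.A0 hg0.symm) x))) := by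
  have h2 : (liftC f g hg1).r0 ((imap f false true).r0 x) =
      (eqToHom hg2.symm).r0 ((invU.map (tmap g (1 : Fin 3) (2 : Fin 3))).r0
        ((eqToHom hg01).r0 ((eqToHom hg0.symm).r0 x))) :=
    DFunLike.congr_fun (congrArg UHom.r0 (lift_hd f g hg1 hg0 hg01 hg2 hmu hgam)) x
  erw [h2, UObj.eqToHom_r0, UObj.eqToHom_r0, UObj.eqToHom_r0]
  rfl

include hmu hgam in
lemma lift_E2 (x : (f.obj false).A1) :
    (liftC f g hg1).r1 ((imap f false true).r1 x) =
      cast (congrArg UObj.A1 hg2.symm)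
        ((tmap g (1 : Fin 3) (2 : Fin 3)).r0
          (cast (congrArg UObj.A1 hg01) (cast (congrArg UObj.A1 hg0.symm) x))) := by
  have h2 : (liftC f g hg1).r1 ((imap f false true).r1 x) =
      (eqToHom hg2.symm).r1 ((invU.map (tmap g (1 : Fin 3) (2 : Fin 3))).r1
        ((eqToHom hg01).r1 ((eqToHom hg0.symm).r1 x))) :=
    DFunLike.congr_fun (congrArg UHom.r1 (lift_hd f g hg1 hg0 hg01 hg2 hmu hgam)) x
  erw [h2, UObj.eqToHom_r1, UObj.eqToHom_r1, UObj.eqToHom_r1]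
  rfl

lemma liftC_r1_apply (z : (f.obj true).A1) :
    (liftC f g hg1).r1 z =
      (tmap g (1 : Fin 3) (2 : Fin 3)).r1 (cast (congrArg UObj.A1 hg1.symm) z) := by
  simp [liftC, UObj.eqToHom_r1]
  exact congrArg _ (UObj.eqToHom_r1 _ _)

lemma liftC_r0_apply (z : (f.obj true).A0) :
    (liftC f g hg1).r0 z =
      (tmap g (1 : Fin 3) (2 : Fin 3)).r0 (cast (congrArg UObj.A0 hg1.symm) z) := by
  simp [liftC, UObj.eqToHom_r0]
  exact congrArg _ (UObj.eqToHom_r0 _ _)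

include hO1 hmu hgam in
lemma lift_key0 : liftObj2 f g hg1 = invUPt.obj (liftObj2 f g hg1) := by
  have hc : (g.obj (2 : Fin 3)).e ((liftC f g hg1).r0 (f.obj true).pt) =
      (tmap g (1 : Fin 3) (2 : Fin 3)).r1
        (cast (congrArg UObj.A1 hg1.symm) ((f.obj true).e (f.obj true).pt)) := by
    rw [(liftC f g hg1).comm (f.obj true).pt]
    exact liftC_r1_apply f g hg1 _
  have hE := lift_E1 f g hg1 hg0 hg01 hg2 hmu hgam (f.obj false).pt
  rw [(imap f false true).hpt] at hE
  have hinner : (cast (congrArg UObj.A0 hg01)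
        (cast (congrArg UObj.A0 hg0.symm) (f.obj false).pt)) =
      cast (congrArg UObj.A1 hg1.symm) ((f.obj true).e (f.obj true).pt) := by
    exact eq_of_heq ((cast_heq _ _).trans ((cast_heq _ _).trans
      ((heq_pt hO1).trans (cast_heq _ _).symm)))
  erw [hinner, ← hc] at hE
  have hpt2 := cast_heq (congrArg UObj.A0 hg2.symm)
    ((g.obj (2 : Fin 3)).e ((liftC f g hg1).r0 (f.obj true).pt))
  rw [← hE] at hpt2
  exact UPtObj.mkEq _ _ _ _ _ _ hg2 hpt2

include hO1 hmu hgam in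
lemma lift_key1 (h2 : liftObj2 f g hg1 = invUPt.obj (liftObj2 f g hg1)) :
    imap f false true ≫ liftSigma f g hg1 =
      eqToHom hO1 ≫ invUPt.map (liftSigma f g hg1) ≫ eqToHom h2.symm := by
  have hr0 : (imap f false true ≫ liftSigma f g hg1).r0 =
      (eqToHom hO1 ≫ invUPt.map (liftSigma f g hg1) ≫ eqToHom h2.symm).r0 := by
    ext x
    show (liftC f g hg1).r0 ((imap f false true).r0 x) =
      (eqToHom h2.symm).r0 ((invUPt.map (liftSigma f g hg1)).r0 ((eqToHom hO1).r0 x))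
    rw [lift_E1 f g hg1 hg0 hg01 hg2 hmu hgam x, UPtObj.eqToHom_r0, UPtObj.eqToHom_r0]
    show _ = cast (congrArg UPtObj.A0 h2.symm)
      ((liftC f g hg1).r1 (cast (congrArg UPtObj.A0 hO1) x))
    erw [liftC_r1_apply, cast_cast, cast_cast]
    rfl
  have hr1 : (imap f false true ≫ liftSigma f g hg1).r1 =
      (eqToHom hO1 ≫ invUPt.map (liftSigma f g hg1) ≫ eqToHom h2.symm).r1 := by
    ext x
    show (liftC f g hg1).r1 ((imap f false true).r1 x) =
      (eqToHom h2.symm).r1 ((invUPt.map (liftSigma f g hg1)).r1 ((eqToHom hO1).r1 x))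
    rw [lift_E2 f g hg1 hg0 hg01 hg2 hmu hgam x, UPtObj.eqToHom_r1, UPtObj.eqToHom_r1]
    show _ = cast (congrArg UPtObj.A1 h2.symm)
      ((liftC f g hg1).r0 (cast (congrArg UPtObj.A1 hO1) x))
    erw [liftC_r0_apply, cast_cast, cast_cast]
    rfl
  exact UPtHom.ext hr0 hr1

lemma liftM_zero : liftM f g hg1 (0 : Fin 3) = 𝟙 _ := rfl
lemma liftM_one : liftM f g hg1 (1 : Fin 3) = imap f false true := rfl
lemma liftM_two :
    liftM f g hg1 (2 : Fin 3) = imap f false true ≫ liftSigma f g hg1 := rfl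

end key

end lift

end Lifting

/-- `p_Δ : Ũ_Δ ⥤ U_Δ` has the equivariant right lifting property with respect to
the inclusion `Ǐ ↪ ▽`: every commutative square of equivariant functors from
`Ǐ ↪ ▽` to `p_Δ` admits an equivariant diagonal filler. -/
theorem pDelta_equivariant_rlp_incl :
    ∀ (f : Iv ⥤ UPtObj) (g : Tri ⥤ UObj),
      invIv ⋙ f = f ⋙ invUPt →
      invTri ⋙ g = g ⋙ invU →
      inclIvTri ⋙ g = f ⋙ pDelta →
      ∃ j : Tri ⥤ UPtObj,
        invTri ⋙ j = j ⋙ invUPt ∧ inclIvTri ⋙ j = f ∧ j ⋙ pDelta = g := by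
  intro f g hf hg h3
  have hg0 : g.obj ((0 : Fin 3) : Tri) = pDelta.obj (f.obj false) :=
    Functor.congr_obj h3 false
  have hg1 : g.obj ((1 : Fin 3) : Tri) = pDelta.obj (f.obj true) :=
    Functor.congr_obj h3 true
  have hO0 : f.obj true = invUPt.obj (f.obj false) := Functor.congr_obj hf false
  have hO1 : f.obj false = invUPt.obj (f.obj true) := Functor.congr_obj hf true
  have hg01 : g.obj ((0 : Fin 3) : Tri) = invU.obj (g.obj ((1 : Fin 3) : Tri)) :=
    Functor.congr_obj hg ((1 : Fin 3) : Tri)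
  have hg2 : g.obj ((2 : Fin 3) : Tri) = invU.obj (g.obj ((2 : Fin 3) : Tri)) :=
    Functor.congr_obj hg ((2 : Fin 3) : Tri)
  have hmu : tmap g (0 : Fin 3) (1 : Fin 3) =
      eqToHom hg0 ≫ pDelta.map (imap f false true) ≫ eqToHom hg1.symm :=
    Functor.congr_hom h3 (X := (false : Iv)) (Y := (true : Iv)) ⟨⟩
  have hgam : tmap g (0 : Fin 3) (2 : Fin 3) =
      eqToHom hg01 ≫ invU.map (tmap g (1 : Fin 3) (2 : Fin 3)) ≫ eqToHom hg2.symm :=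
    Functor.congr_hom hg (X := ((1 : Fin 3) : Tri)) (Y := ((2 : Fin 3) : Tri)) ⟨⟩
  have key0 := lift_key0 f g hg1 hg0 hO1 hg01 hg2 hmu hgam
  refine ⟨liftJ f g hg1, ?_, ?_, ?_⟩
  · -- equivariance
    refine tri_ext (F := invTri ⋙ liftJ f g hg1) (G := liftJ f g hg1 ⋙ invUPt)
      hO0 hO1 key0 ?_ ?_
    · show Groupoid.inv (liftM f g hg1 (1 : Fin 3)) ≫ liftM f g hg1 (0 : Fin 3) =
        eqToHom hO0 ≫ invUPt.map (Groupoid.inv (liftM f g hg1 (0 : Fin 3)) ≫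
          liftM f g hg1 (1 : Fin 3)) ≫ eqToHom hO1.symm
      erw [liftM_zero, liftM_one, groupoid_inv_id, Category.id_comp, Category.comp_id,
        ← iv_map_inv f false true]
      exact Functor.congr_hom hf (X := (false : Iv)) (Y := (true : Iv)) ⟨⟩
    · show Groupoid.inv (liftM f g hg1 (0 : Fin 3)) ≫ liftM f g hg1 (2 : Fin 3) =
        eqToHom hO1 ≫ invUPt.map (Groupoid.inv (liftM f g hg1 (1 : Fin 3)) ≫
          liftM f g hg1 (2 : Fin 3)) ≫ eqToHom key0.symm
      erw [liftM_zero, liftM_one, liftM_two, groupoid_inv_id,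
        Category.id_comp (imap f false true ≫ liftSigma f g hg1),
        ← Category.assoc (Groupoid.inv (imap f false true)), Groupoid.inv_comp,
        Category.id_comp (liftSigma f g hg1)]
      exact lift_key1 f g hg1 hg0 hO1 hg01 hg2 hmu hgam key0
  · -- restriction to the interval
    refine iv_ext (F := inclIvTri ⋙ liftJ f g hg1) (G := f) rfl rfl ?_
    show Groupoid.inv (liftM f g hg1 (0 : Fin 3)) ≫ liftM f g hg1 (1 : Fin 3) =
      eqToHom rfl ≫ imap f false true ≫ eqToHom rfl
    erw [liftM_zero, liftM_one, groupoid_inv_id, Category.id_comp (imap f false true)]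
  · -- projection
    refine tri_ext (F := liftJ f g hg1 ⋙ pDelta) (G := g) hg0.symm hg1.symm rfl ?_ ?_
    · show pDelta.map (Groupoid.inv (liftM f g hg1 (0 : Fin 3)) ≫
          liftM f g hg1 (1 : Fin 3)) =
        eqToHom hg0.symm ≫ tmap g (0 : Fin 3) (1 : Fin 3) ≫ eqToHom hg1.symm.symm
      erw [liftM_zero, liftM_one, groupoid_inv_id, Category.id_comp (imap f false true),
        hmu]
      simp
      rfl
    · show pDelta.map (Groupoid.inv (liftM f g hg1 (1 : Fin 3)) ≫
          liftM f g hg1 (2 : Fin 3)) =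
        eqToHom hg1.symm ≫ tmap g (1 : Fin 3) (2 : Fin 3) ≫ eqToHom rfl
      erw [liftM_one, liftM_two, ← Category.assoc (Groupoid.inv (imap f false true)),
        Groupoid.inv_comp, Category.id_comp (liftSigma f g hg1), eqToHom_refl,
        Category.comp_id (tmap g (1 : Fin 3) (2 : Fin 3))]
      rfl
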